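/- arXiv:2405.10360 — 4 statements merged into one kernel-verified Lean document; each statement's English description precedes it below -/
import Mathlib

section
/- Let d ≥ 1, let μ be the Haar probability measure on the compact group U(d) of d×d complex unitary matrices, and let A ∈ M_d(ℂ). Then the (entrywise Bochner) integral ∫_{U(d)} V A V* dμ(V) equals (tr(A)/d) · 1, where 1 is the d×d identity matrix. -/
/-!
Left invariance of the Haar measure makes the twirl `M = ∫ V A V* dμ(V)` invariant under
conjugation by every unitary, so `M` commutes with every unitary and hence with their linear
span, which is the whole matrix algebra. Thus `M` is scalar, and `tr M = tr A` fixes the scalar.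
-/

open Matrix MeasureTheory

-- The L² operator norm makes `Matrix n n ℂ` a C⋆-algebra whose topology is the entrywise one.
open scoped Matrix.Norms.L2Operator

namespace Matrix

variable {n : Type*} [Fintype n] [DecidableEq n]

theorem mem_range_scalar_of_commute_unitary {M : Matrix n n ℂ}
    (hM : ∀ W ∈ unitaryGroup n ℂ, Commute M W) : M ∈ Set.range (scalar n) := by
  have hspan : (unitaryGroup n ℂ : Set (Matrix n n ℂ)) ⊆ Subalgebra.centralizer ℂ {M} :=
    fun W hW ↦ (Subalgebra.mem_centralizer_iff ℂ).mpr (by simpa using (hM W hW).eq)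
  rw [← center_eq_range, Semigroup.mem_center_iff]
  intro X
  have hX : X ∈ Subalgebra.toSubmodule (Subalgebra.centralizer ℂ {M}) :=
    Submodule.span_le.mpr hspan (CStarAlgebra.span_unitary (Matrix n n ℂ) ▸ Submodule.mem_top)
  simpa using ((Subalgebra.mem_centralizer_iff ℂ).mp hX M rfl).symm

theorem norm_unitary_mul_mul_star (V : unitaryGroup n ℂ) (A : Matrix n n ℂ) :
    ‖(V : Matrix n n ℂ) * A * star (V : Matrix n n ℂ)‖ = ‖A‖ := by
  rw [CStarRing.norm_mul_mem_unitary _ (Unitary.star_mem V.2), CStarRing.norm_coe_unitary_mul]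

end Matrix

namespace Matrix.UnitaryGroup

variable {n : Type*} [Fintype n] [DecidableEq n]
  [MeasurableSpace (unitaryGroup n ℂ)] [BorelSpace (unitaryGroup n ℂ)]
  (μ : Measure (unitaryGroup n ℂ))

noncomputable def twirl (A : Matrix n n ℂ) : Matrix n n ℂ :=
  ∫ V : unitaryGroup n ℂ, (V : Matrix n n ℂ) * A * star (V : Matrix n n ℂ) ∂μ

theorem integrable_mul_mul_star [IsFiniteMeasure μ] (A : Matrix n n ℂ) :
    Integrable (fun V : unitaryGroup n ℂ ↦ (V : Matrix n n ℂ) * A * star (V : Matrix n n ℂ)) μ :=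
  (integrable_const ‖A‖).mono' (by fun_prop : Continuous _).aestronglyMeasurable
    (ae_of_all _ fun V ↦ (norm_unitary_mul_mul_star V A).le)

theorem twirl_apply [IsFiniteMeasure μ] (A : Matrix n n ℂ) (i j : n) :
    twirl μ A i j =
      ∫ V : unitaryGroup n ℂ, ((V : Matrix n n ℂ) * A * star (V : Matrix n n ℂ)) i j ∂μ :=
  ((entryLinearMap ℂ ℂ i j).toContinuousLinearMap.integral_comp_comm
    (integrable_mul_mul_star μ A)).symm

theorem trace_twirl [IsProbabilityMeasure μ] (A : Matrix n n ℂ) :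
    (twirl μ A).trace = A.trace := by
  have htrace (V : unitaryGroup n ℂ) :
      ((V : Matrix n n ℂ) * A * star (V : Matrix n n ℂ)).trace = A.trace := by
    rw [trace_mul_cycle, star_mul_self, one_mul]
  calc (twirl μ A).trace
      = ∫ V : unitaryGroup n ℂ, ((V : Matrix n n ℂ) * A * star (V : Matrix n n ℂ)).trace ∂μ :=
        ((traceLinearMap n ℂ ℂ).toContinuousLinearMap.integral_comp_comm
          (integrable_mul_mul_star μ A)).symm
    _ = A.trace := by simp [htrace]

theorem mul_twirl_mul_star [IsFiniteMeasure μ] [μ.IsMulLeftInvariant] (A : Matrix n n ℂ)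
    (W : unitaryGroup n ℂ) :
    (W : Matrix n n ℂ) * twirl μ A * star (W : Matrix n n ℂ) = twirl μ A := by
  let conjW : Matrix n n ℂ →L[ℂ] Matrix n n ℂ :=
    (LinearMap.mulLeft ℂ (W : Matrix n n ℂ) ∘ₗ
      LinearMap.mulRight ℂ (star (W : Matrix n n ℂ))).toContinuousLinearMap
  calc (W : Matrix n n ℂ) * twirl μ A * star (W : Matrix n n ℂ)
      = ∫ V, conjW ((V : Matrix n n ℂ) * A * star (V : Matrix n n ℂ)) ∂μ := by
        rw [conjW.integral_comp_comm (integrable_mul_mul_star μ A)]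
        simp [conjW, twirl, mul_assoc]
    _ = ∫ V, ((W * V : unitaryGroup n ℂ) : Matrix n n ℂ) * A *
          star ((W * V : unitaryGroup n ℂ) : Matrix n n ℂ) ∂μ := by
        congr 1 with V
        simp [conjW, star_mul, mul_assoc]
    _ = twirl μ A :=
        integral_mul_left_eq_self
          (fun V : unitaryGroup n ℂ ↦ (V : Matrix n n ℂ) * A * star (V : Matrix n n ℂ)) W

theorem twirl_eq_trace_div_smul_one [Nonempty n] [IsProbabilityMeasure μ]
    [μ.IsMulLeftInvariant] (A : Matrix n n ℂ) :
    twirl μ A = (A.trace / Fintype.card n) • (1 : Matrix n n ℂ) := by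
  have hcomm : ∀ W ∈ unitaryGroup n ℂ, Commute (twirl μ A) W := fun W hW ↦
    calc twirl μ A * W = W * twirl μ A * star W * W := by rw [mul_twirl_mul_star μ A ⟨W, hW⟩]
      _ = W * twirl μ A := by rw [mul_assoc, mem_unitaryGroup_iff'.mp hW, mul_one]
  obtain ⟨c, hc⟩ := mem_range_scalar_of_commute_unitary hcomm
  have hcard : (Fintype.card n : ℂ) ≠ 0 := Nat.cast_ne_zero.mpr Fintype.card_ne_zero
  have htrace : (Fintype.card n : ℂ) * c = A.trace := by
    simpa [← hc] using trace_twirl μ A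
  rw [← hc, ← htrace, mul_div_cancel_left₀ c hcard, scalar_apply, smul_one_eq_diagonal]

end Matrix.UnitaryGroup

theorem stmt6_general {d : ℕ}
    [MeasurableSpace (Matrix.unitaryGroup (Fin d) ℂ)]
    [BorelSpace (Matrix.unitaryGroup (Fin d) ℂ)]
    (μ : Measure (Matrix.unitaryGroup (Fin d) ℂ))
    [μ.IsHaarMeasure] [IsProbabilityMeasure μ]
    (A : Matrix (Fin d) (Fin d) ℂ) (i j : Fin d) :
    ∫ V : Matrix.unitaryGroup (Fin d) ℂ,
        ((V : Matrix (Fin d) (Fin d) ℂ) * A * star (V : Matrix (Fin d) (Fin d) ℂ)) i j ∂μ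
      = ((A.trace / d) • (1 : Matrix (Fin d) (Fin d) ℂ)) i j := by
  have : Nonempty (Fin d) := ⟨i⟩
  rw [← UnitaryGroup.twirl_apply, UnitaryGroup.twirl_eq_trace_div_smul_one, Fintype.card_fin]

/-- The one-fold twirl over the Haar probability measure on `U(d)`:
`∫ V A V* dμ(V) = (tr A / d) • 1`, entrywise. -/
theorem stmt6 {d : ℕ} (hd : 1 ≤ d)
    [MeasurableSpace (Matrix.unitaryGroup (Fin d) ℂ)]
    [BorelSpace (Matrix.unitaryGroup (Fin d) ℂ)]
    (μ : Measure (Matrix.unitaryGroup (Fin d) ℂ))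
    [μ.IsHaarMeasure] [IsProbabilityMeasure μ]
    (A : Matrix (Fin d) (Fin d) ℂ) (i j : Fin d) :
    ∫ V : Matrix.unitaryGroup (Fin d) ℂ,
        ((V : Matrix (Fin d) (Fin d) ℂ) * A * star (V : Matrix (Fin d) (Fin d) ℂ)) i j ∂μ
      = ((A.trace / d) • (1 : Matrix (Fin d) (Fin d) ℂ)) i j :=
  stmt6_general μ A i j
end

section
/- Let n ≥ 1, d = 2ⁿ, and let Z := σ_z ⊗ 1^{⊗(n−1)} and F := σ_x ⊗ 1^{⊗(n−1)} in M_d(ℂ) (iterated Kronecker products, where 1 is the 2×2 identity). Let U ∈ M_d(ℂ) be unitary, and suppose W₁, …, Wₙ ∈ M₂(ℂ) are unitary with W₁ ⊗ ⋯ ⊗ Wₙ = U* F U. Then W := W₁ ⊗ ⋯ ⊗ Wₙ is unitary and satisfies W* (U* Z U) W = −(U* Z U); consequently, for every ψ ∈ ℂ^d, ⟨Wψ, (U* Z U) Wψ⟩ = −⟨ψ, (U* Z U) ψ⟩, i.e. W is a strong universal adversarial attack implementable as a tensor product of single-qubit unitaries. -/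
open Matrix

/-- The `n`-fold tensor (Kronecker) product of single-qubit matrices, as a matrix
indexed by `Fin n → Fin 2`. -/
noncomputable def tensorProd {n : ℕ} (M : Fin n → Matrix (Fin 2) (Fin 2) ℂ) :
    Matrix (Fin n → Fin 2) (Fin n → Fin 2) ℂ :=
  fun s t => ∏ j, M j (s j) (t j)

/-- The Pauli-Z matrix. -/
noncomputable def σz : Matrix (Fin 2) (Fin 2) ℂ := !![1, 0; 0, -1]

/-- The Pauli-X matrix. -/
noncomputable def σx : Matrix (Fin 2) (Fin 2) ℂ := !![0, 1; 1, 0]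

/-!
`F = σx ⊗ 1 ⊗ ⋯ ⊗ 1` is a self-adjoint involution anticommuting with `Z = σz ⊗ 1 ⊗ ⋯ ⊗ 1`,
so `F* Z F = -Z`. Conjugation by the unitary `U` preserves products and adjoints, hence
`W = U* F U` satisfies `W* (U* Z U) W = U* (F* Z F) U = -(U* Z U)`; the statement about
expectation values is this identity applied to `ψ`.
-/

theorem tensorProd_mul {n : ℕ} (M N : Fin n → Matrix (Fin 2) (Fin 2) ℂ) :
    tensorProd M * tensorProd N = tensorProd (fun i => M i * N i) := by
  ext s u
  simp only [tensorProd, mul_apply]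
  rw [Finset.prod_univ_sum, Fintype.piFinset_univ]
  simp [Finset.prod_mul_distrib]

theorem conjTranspose_tensorProd {n : ℕ} (M : Fin n → Matrix (Fin 2) (Fin 2) ℂ) :
    (tensorProd M)ᴴ = tensorProd (fun i => (M i)ᴴ) := by
  ext s t
  simp [tensorProd, conjTranspose_apply]

theorem tensorProd_one {n : ℕ} : tensorProd (fun _ : Fin n => (1 : Matrix (Fin 2) (Fin 2) ℂ)) = 1 := by
  ext s t
  by_cases h : s = t
  · subst h
    simp [tensorProd]
  · obtain ⟨j, hj⟩ := Function.ne_iff.mp h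
    simpa [tensorProd, one_apply, h] using Finset.prod_eq_zero (Finset.mem_univ j) (by simp [hj])

theorem tensorProd_smul {n : ℕ} (c : Fin n → ℂ) (M : Fin n → Matrix (Fin 2) (Fin 2) ℂ) :
    tensorProd (fun i => c i • M i) = (∏ i, c i) • tensorProd M := by
  ext s t
  simp [tensorProd, Finset.prod_mul_distrib]

theorem tensorProd_mem_unitaryGroup {n : ℕ} {M : Fin n → Matrix (Fin 2) (Fin 2) ℂ}
    (hM : ∀ i, M i ∈ unitaryGroup (Fin 2) ℂ) :
    tensorProd M ∈ unitaryGroup (Fin n → Fin 2) ℂ := by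
  rw [mem_unitaryGroup_iff', star_eq_conjTranspose, conjTranspose_tensorProd, tensorProd_mul,
    ← tensorProd_one]
  exact congrArg tensorProd (funext fun i => mem_unitaryGroup_iff'.mp (hM i))

noncomputable def onQubit {n : ℕ} (i : Fin n) (A : Matrix (Fin 2) (Fin 2) ℂ) :
    Matrix (Fin n → Fin 2) (Fin n → Fin 2) ℂ :=
  tensorProd (fun j => if j = i then A else 1)

section onQubit

variable {n : ℕ} (i : Fin n)

theorem onQubit_mul (A B : Matrix (Fin 2) (Fin 2) ℂ) :
    onQubit i A * onQubit i B = onQubit i (A * B) := by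
  rw [onQubit, onQubit, tensorProd_mul, onQubit]
  congr! 2 with j
  split_ifs <;> simp

theorem onQubit_one : onQubit i (1 : Matrix (Fin 2) (Fin 2) ℂ) = 1 := by
  simp [onQubit, tensorProd_one]

theorem conjTranspose_onQubit (A : Matrix (Fin 2) (Fin 2) ℂ) :
    (onQubit i A)ᴴ = onQubit i Aᴴ := by
  rw [onQubit, conjTranspose_tensorProd, onQubit]
  congr! 2 with j
  split_ifs <;> simp

theorem onQubit_neg (A : Matrix (Fin 2) (Fin 2) ℂ) : onQubit i (-A) = -onQubit i A := by
  have h := tensorProd_smul (fun j => if j = i then -1 else 1)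
    (fun j => if j = i then A else 1)
  rw [Finset.prod_ite_eq' Finset.univ i fun _ => (-1 : ℂ)] at h
  simp only [Finset.mem_univ, if_true, neg_one_smul] at h
  rw [onQubit, onQubit, ← h]
  congr! 2 with j
  split_ifs <;> simp

end onQubit

theorem σx_mul_σx : σx * σx = 1 := by
  ext i j
  fin_cases i <;> fin_cases j <;> simp [σx]

theorem σx_mul_σz : σx * σz = -(σz * σx) := by
  ext i j
  fin_cases i <;> fin_cases j <;> simp [σx, σz]

theorem conjTranspose_σx : σxᴴ = σx := by
  ext i j
  fin_cases i <;> fin_cases j <;> simp [σx]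

theorem star_mul_mul_self_eq_neg {R : Type*} [Ring R] [StarMul R] {F Z : R}
    (hF : star F = F) (hFF : F * F = 1) (hFZ : F * Z = -(Z * F)) : star F * Z * F = -Z := by
  rw [hF, hFZ, neg_mul, mul_assoc, hFF, mul_one]

theorem star_conj_mul_conj_mul_conj {R : Type*} [Monoid R] [StarMul R] {U : R}
    (hU : U ∈ unitary R) (A B C : R) :
    star (star U * A * U) * (star U * B * U) * (star U * C * U) = star U * (star A * B * C) * U := by
  have hUU : U * star U = 1 := Unitary.mul_star_self_of_mem hU
  simp only [star_mul, star_star, mul_assoc]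
  simp only [← mul_assoc U (star U), hUU, one_mul]

theorem star_mulVec_dotProduct_mulVec_mulVec {m : Type*} [Fintype m] (W A : Matrix m m ℂ)
    (ψ : m → ℂ) : star (W *ᵥ ψ) ⬝ᵥ A *ᵥ (W *ᵥ ψ) = star ψ ⬝ᵥ (Wᴴ * A * W) *ᵥ ψ := by
  rw [mulVec_mulVec, star_mulVec, ← dotProduct_mulVec, mulVec_mulVec, ← Matrix.mul_assoc]

/-- If single-qubit unitaries `W₁, …, Wₙ` satisfy
`W₁ ⊗ ⋯ ⊗ Wₙ = U* F U` where `F = σ_x ⊗ 1^{⊗(n-1)}`, then `W = W₁ ⊗ ⋯ ⊗ Wₙ` is a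
unitary strong universal adversarial attack: `W* (U* Z U) W = -(U* Z U)` for
`Z = σ_z ⊗ 1^{⊗(n-1)}`, and hence it flips the prediction `⟨ψ, (U*ZU) ψ⟩` of the
classifier on every input state `ψ`. -/
theorem stmt12 {n : ℕ} (hn : 1 ≤ n)
    (U : Matrix (Fin n → Fin 2) (Fin n → Fin 2) ℂ)
    (hU : U ∈ Matrix.unitaryGroup (Fin n → Fin 2) ℂ)
    (W : Fin n → Matrix (Fin 2) (Fin 2) ℂ)
    (hW : ∀ i, W i ∈ Matrix.unitaryGroup (Fin 2) ℂ)
    (Z F : Matrix (Fin n → Fin 2) (Fin n → Fin 2) ℂ)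
    (hZ : Z = tensorProd (fun j => if j = (⟨0, hn⟩ : Fin n) then σz else 1))
    (hF : F = tensorProd (fun j => if j = (⟨0, hn⟩ : Fin n) then σx else 1))
    (hWF : tensorProd W = star U * F * U) :
    tensorProd W ∈ Matrix.unitaryGroup (Fin n → Fin 2) ℂ ∧
    star (tensorProd W) * (star U * Z * U) * tensorProd W = -(star U * Z * U) ∧
    ∀ ψ : (Fin n → Fin 2) → ℂ,
      star ((tensorProd W).mulVec ψ) ⬝ᵥ
          (star U * Z * U).mulVec ((tensorProd W).mulVec ψ)
        = -(star ψ ⬝ᵥ (star U * Z * U).mulVec ψ) := by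
  change Z = onQubit _ σz at hZ
  change F = onQubit _ σx at hF
  have hFZ : star F * Z * F = -Z := by
    refine star_mul_mul_self_eq_neg ?_ ?_ ?_
    · rw [hF, star_eq_conjTranspose, conjTranspose_onQubit, conjTranspose_σx]
    · rw [hF, onQubit_mul, σx_mul_σx, onQubit_one]
    · rw [hF, hZ, onQubit_mul, onQubit_mul, σx_mul_σz, onQubit_neg]
  have hflip : star (tensorProd W) * (star U * Z * U) * tensorProd W = -(star U * Z * U) := by
    rw [hWF, star_conj_mul_conj_mul_conj hU, hFZ, Matrix.mul_neg, Matrix.neg_mul]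
  refine ⟨tensorProd_mem_unitaryGroup hW, hflip, fun ψ => ?_⟩
  rw [star_mulVec_dotProduct_mulVec_mulVec, ← star_eq_conjTranspose, hflip, neg_mulVec,
    dotProduct_neg]
end

section
/- Let d ≥ 1 and ε ≥ 0. Let A ∈ M_d(ℂ) be Hermitian and unitary, let W₀ ∈ M_d(ℂ) be unitary with W₀* A W₀ = −A, and let W ∈ M_d(ℂ) be unitary with ‖W₀ − W‖_op ≤ ε. Then every unit vector ψ ∈ ℂ^d with |⟨ψ, A ψ⟩| > 2ε is misclassified after the attack: the real numbers ⟨ψ, A ψ⟩ and ⟨Wψ, A Wψ⟩ are nonzero and of opposite sign. -/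
/-!
The spoof `W₀` negates the prediction exactly: `⟨W₀ψ, A W₀ψ⟩ = ⟨ψ, W₀* A W₀ ψ⟩ = -⟨ψ, Aψ⟩`.
The quadratic form `x ↦ ⟨x, A x⟩` of an operator of norm at most one is `2`-Lipschitz on the
unit ball, so moving `W₀ψ` to `Wψ` changes the prediction by at most `2‖W₀ - W‖ ≤ 2ε`; this is
less than `|⟨ψ, Aψ⟩|`, so the sign of `-⟨ψ, Aψ⟩` survives.
-/

open Matrix

/-- The `ℓ² → ℓ²` operator norm (largest singular value, Schatten-∞ norm) of a
complex matrix. -/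
noncomputable def opNorm {d : ℕ} (M : Matrix (Fin d) (Fin d) ℂ) : ℝ :=
  ‖Matrix.toEuclideanCLM (𝕜 := ℂ) M‖

open scoped InnerProductSpace

lemma opposite_signs_of_abs_add_le_of_lt_abs {x y δ : ℝ} (hx : δ < |x|) (hxy : |y + x| ≤ δ) :
    (0 < x ∧ y < 0) ∨ (x < 0 ∧ 0 < y) := by
  have hδ : 0 ≤ δ := (abs_nonneg _).trans hxy
  obtain ⟨hlo, hhi⟩ := abs_le.mp hxy
  rcases lt_abs.mp hx with hpos | hneg
  · exact Or.inl ⟨by linarith, by linarith⟩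
  · exact Or.inr ⟨by linarith, by linarith⟩

section InnerProductSpace

open ContinuousLinearMap

variable {𝕜 E : Type*} [RCLike 𝕜] [NormedAddCommGroup E] [InnerProductSpace 𝕜 E]

lemma norm_inner_map_self_sub_inner_map_self_le (T : E →L[𝕜] E) (x y : E) :
    ‖⟪x, T x⟫_𝕜 - ⟪y, T y⟫_𝕜‖ ≤ ‖T‖ * (‖x‖ + ‖y‖) * ‖x - y‖ := by
  have hsplit : ⟪x, T x⟫_𝕜 - ⟪y, T y⟫_𝕜 = ⟪x - y, T x⟫_𝕜 + ⟪y, T (x - y)⟫_𝕜 := by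
    simp only [inner_sub_left, inner_sub_right, map_sub]
    ring
  calc ‖⟪x, T x⟫_𝕜 - ⟪y, T y⟫_𝕜‖
      ≤ ‖x - y‖ * ‖T x‖ + ‖y‖ * ‖T (x - y)‖ := by
        rw [hsplit]
        exact (norm_add_le _ _).trans (add_le_add (norm_inner_le_norm _ _) (norm_inner_le_norm _ _))
    _ ≤ ‖x - y‖ * (‖T‖ * ‖x‖) + ‖y‖ * (‖T‖ * ‖x - y‖) := by
        gcongr <;> exact T.le_opNorm _
    _ = ‖T‖ * (‖x‖ + ‖y‖) * ‖x - y‖ := by ring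

variable [CompleteSpace E]

lemma norm_le_one_of_mem_unitary {U : E →L[𝕜] E} (hU : U ∈ unitary (E →L[𝕜] E)) : ‖U‖ ≤ 1 :=
  opNorm_le_bound _ zero_le_one fun x ↦ by rw [norm_map_of_mem_unitary hU, one_mul]

lemma inner_map_apply_self_eq_inner_star_mul_mul_apply (T U : E →L[𝕜] E) (v : E) :
    ⟪U v, T (U v)⟫_𝕜 = ⟪v, (star U * T * U) v⟫_𝕜 := by
  rw [star_eq_adjoint]
  exact (adjoint_inner_right U v (T (U v))).symm

theorem re_inner_map_self_opposite_signs_of_norm_sub_le {T U₀ U : E →L[𝕜] E} {ε : ℝ}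
    (hT : ‖T‖ ≤ 1) (hU₀ : U₀ ∈ unitary (E →L[𝕜] E)) (hU : U ∈ unitary (E →L[𝕜] E))
    (hspoof : star U₀ * T * U₀ = -T) (hclose : ‖U₀ - U‖ ≤ ε) {v : E} (hv : ‖v‖ = 1)
    (hbig : 2 * ε < |RCLike.re ⟪v, T v⟫_𝕜|) :
    (0 < RCLike.re ⟪v, T v⟫_𝕜 ∧ RCLike.re ⟪U v, T (U v)⟫_𝕜 < 0) ∨
      (RCLike.re ⟪v, T v⟫_𝕜 < 0 ∧ 0 < RCLike.re ⟪U v, T (U v)⟫_𝕜) := by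
  have hflip : ⟪U₀ v, T (U₀ v)⟫_𝕜 = -⟪v, T v⟫_𝕜 := by
    rw [inner_map_apply_self_eq_inner_star_mul_mul_apply, hspoof, _root_.neg_apply, inner_neg_right]
  have hmove : ‖U v - U₀ v‖ ≤ ε :=
    calc ‖U v - U₀ v‖ = ‖(U₀ - U) v‖ := by rw [norm_sub_rev, _root_.sub_apply]
      _ ≤ ‖U₀ - U‖ * ‖v‖ := le_opNorm _ _
      _ ≤ ε := by rw [hv, mul_one]; exact hclose
  have hperturb : ‖⟪U v, T (U v)⟫_𝕜 - ⟪U₀ v, T (U₀ v)⟫_𝕜‖ ≤ 2 * ε :=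
    calc _ ≤ ‖T‖ * (‖U v‖ + ‖U₀ v‖) * ‖U v - U₀ v‖ :=
          norm_inner_map_self_sub_inner_map_self_le T _ _
      _ ≤ 1 * (1 + 1) * ε := by
          rw [norm_map_of_mem_unitary hU, norm_map_of_mem_unitary hU₀, hv]
          gcongr
      _ = 2 * ε := by ring
  refine opposite_signs_of_abs_add_le_of_lt_abs hbig ?_
  rw [hflip, sub_neg_eq_add] at hperturb
  simpa only [map_add] using (RCLike.abs_re_le_norm _).trans hperturb

end InnerProductSpace

lemma Matrix.star_dotProduct_mulVec_eq_inner_toEuclideanCLM {𝕜 n : Type*} [RCLike 𝕜]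
    [Fintype n] [DecidableEq n] (M : Matrix n n 𝕜) (x y : n → 𝕜) :
    star x ⬝ᵥ M *ᵥ y =
      ⟪WithLp.toLp 2 x, toEuclideanCLM (n := n) (𝕜 := 𝕜) M (WithLp.toLp 2 y)⟫_𝕜 := by
  rw [toEuclideanCLM_toLp, EuclideanSpace.inner_toLp_toLp, dotProduct_comm]

theorem stmt16_general {d : ℕ} (ε : ℝ)
    (A W₀ W : Matrix (Fin d) (Fin d) ℂ)
    (hA : A ∈ Matrix.unitaryGroup (Fin d) ℂ)
    (hW₀ : W₀ ∈ Matrix.unitaryGroup (Fin d) ℂ)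
    (hW : W ∈ Matrix.unitaryGroup (Fin d) ℂ)
    (hspoof : star W₀ * A * W₀ = -A)
    (hclose : opNorm (W₀ - W) ≤ ε)
    (ψ : Fin d → ℂ) (hψ : star ψ ⬝ᵥ ψ = 1)
    (hbig : 2 * ε < |(star ψ ⬝ᵥ A.mulVec ψ).re|) :
    (0 < (star ψ ⬝ᵥ A.mulVec ψ).re ∧
        (star (W.mulVec ψ) ⬝ᵥ A.mulVec (W.mulVec ψ)).re < 0) ∨
      ((star ψ ⬝ᵥ A.mulVec ψ).re < 0 ∧
        0 < (star (W.mulVec ψ) ⬝ᵥ A.mulVec (W.mulVec ψ)).re) := by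
  set φ := toEuclideanCLM (n := Fin d) (𝕜 := ℂ)
  have hv : ‖WithLp.toLp 2 ψ‖ = 1 := by
    have hsq : ‖WithLp.toLp 2 ψ‖ ^ 2 = 1 := by
      rw [← inner_self_eq_norm_sq (𝕜 := ℂ), EuclideanSpace.inner_toLp_toLp, dotProduct_comm, hψ,
        RCLike.one_re]
    exact (pow_eq_one_iff_of_nonneg (norm_nonneg _) two_ne_zero).mp hsq
  have hWψ : φ W (WithLp.toLp 2 ψ) = WithLp.toLp 2 (W *ᵥ ψ) := toEuclideanCLM_toLp W ψ
  simp only [star_dotProduct_mulVec_eq_inner_toEuclideanCLM, ← hWψ] at hbig ⊢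
  exact re_inner_map_self_opposite_signs_of_norm_sub_le
    (norm_le_one_of_mem_unitary (Unitary.map_mem φ hA)) (Unitary.map_mem φ hW₀)
    (Unitary.map_mem φ hW) (by rw [← map_star, ← map_mul, ← map_mul, hspoof, map_neg])
    (by rwa [← map_sub]) hv hbig

/-- If `W₀` is a perfect strong universal spoof for the Hermitian
unitary measurement operator `A` (i.e. `W₀* A W₀ = -A`) and `‖W₀ - W‖_op ≤ ε`, then
every unit vector `ψ` with `|⟨ψ, Aψ⟩| > 2ε` is misclassified after the attack `W`:
the predictions `⟨ψ, Aψ⟩` and `⟨Wψ, A Wψ⟩` are nonzero and of opposite sign. -/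
theorem stmt16 {d : ℕ} (hd : 1 ≤ d) (ε : ℝ) (hε : 0 ≤ ε)
    (A W₀ W : Matrix (Fin d) (Fin d) ℂ)
    (hAherm : A.IsHermitian)
    (hA : A ∈ Matrix.unitaryGroup (Fin d) ℂ)
    (hW₀ : W₀ ∈ Matrix.unitaryGroup (Fin d) ℂ)
    (hW : W ∈ Matrix.unitaryGroup (Fin d) ℂ)
    (hspoof : star W₀ * A * W₀ = -A)
    (hclose : opNorm (W₀ - W) ≤ ε)
    (ψ : Fin d → ℂ) (hψ : star ψ ⬝ᵥ ψ = 1)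
    (hbig : 2 * ε < |(star ψ ⬝ᵥ A.mulVec ψ).re|) :
    (0 < (star ψ ⬝ᵥ A.mulVec ψ).re ∧
        (star (W.mulVec ψ) ⬝ᵥ A.mulVec (W.mulVec ψ)).re < 0) ∨
      ((star ψ ⬝ᵥ A.mulVec ψ).re < 0 ∧
        0 < (star (W.mulVec ψ) ⬝ᵥ A.mulVec (W.mulVec ψ)).re) :=
  stmt16_general ε A W₀ W hA hW₀ hW hspoof hclose ψ hψ hbig
end

section
/- Let a > 0 and b > 0. Then ∫₀^∞ ( ∫₀^{a·y} exp(−x²) dx ) · exp(−b·y²) dy = arctan(a/√b) / (2√b). Equivalently, ∫₀^∞ erf(a y)·exp(−b y²) dy = arctan(a/√b)/√(π b), where erf(z) = (2/√π)·∫₀^z exp(−t²) dt. -/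
/-!
Substituting `x = t y` turns the inner integral into `∫₀^a y exp(-t²y²) dt`, so the left-hand side
becomes the double integral of `y exp(-(t² + b) y²)` over `(0, ∞) × (0, a]`. This integrand is
dominated by `y exp(-b y²)`, so Fubini applies; integrating in `y` first gives `1 / (2 (t² + b))`,
whose integral over `(0, a]` is `arctan (a / √b) / (2 √b)`.
-/

/-- The Gaussian error function `erf(z) = (2/√π) ∫₀^z exp(-t²) dt`. -/
noncomputable def erf (z : ℝ) : ℝ :=
  2 / Real.sqrt Real.pi * ∫ t in (0 : ℝ)..z, Real.exp (-t ^ 2)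

open MeasureTheory Set Real

lemma integral_Ioi_mul_exp_neg_mul_sq {c : ℝ} (hc : 0 < c) :
    ∫ y in Ioi (0 : ℝ), y * exp (-c * y ^ 2) = (2 * c)⁻¹ := by
  exact_mod_cast integral_mul_cexp_neg_mul_sq (b := (c : ℂ)) (by simpa using hc)

lemma integral_inv_two_mul_sq_add {b : ℝ} (hb : 0 < b) (a : ℝ) :
    ∫ t in (0 : ℝ)..a, (2 * (t ^ 2 + b))⁻¹ = arctan (a / √b) / (2 * √b) := by
  calc _ = ∫ t in (0 : ℝ)..a, 2⁻¹ * (√b ^ 2 + t ^ 2)⁻¹ := by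
        congr with t
        rw [sq_sqrt hb.le, mul_inv, add_comm]
    _ = _ := by
        rw [intervalIntegral.integral_const_mul, integral_inv_sq_add_sq (sqrt_pos.2 hb).ne']
        simp only [zero_div, arctan_zero, sub_zero]
        ring

lemma integral_exp_neg_sq_mul_exp_neg_mul_sq (a b y : ℝ) :
    (∫ x in (0 : ℝ)..(a * y), exp (-x ^ 2)) * exp (-b * y ^ 2)
      = ∫ t in (0 : ℝ)..a, y * exp (-(t ^ 2 + b) * y ^ 2) := by
  have hsubst : ∫ x in (0 : ℝ)..(a * y), exp (-x ^ 2)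
      = ∫ t in (0 : ℝ)..a, y * exp (-(t * y) ^ 2) := by
    rw [intervalIntegral.integral_const_mul]
    simpa using (intervalIntegral.mul_integral_comp_mul_right (a := 0) (b := a)
      (f := fun x => exp (-x ^ 2)) y).symm
  rw [hsubst, ← intervalIntegral.integral_mul_const]
  congr with t
  rw [mul_assoc, ← exp_add]
  ring_nf

lemma integrable_mul_exp_neg_sq_add_mul_sq {b : ℝ} (hb : 0 < b) (s : Set ℝ) (ν : Measure ℝ)
    [IsFiniteMeasure ν] :
    Integrable (Function.uncurry fun y t : ℝ => y * exp (-(t ^ 2 + b) * y ^ 2))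
      ((volume.restrict s).prod ν) := by
  have hdom : Integrable (fun p : ℝ × ℝ => p.1 * exp (-b * p.1 ^ 2) * 1)
      ((volume.restrict s).prod ν) :=
    (integrable_mul_exp_neg_mul_sq hb).integrableOn.mul_prod (integrable_const 1)
  refine hdom.mono (by fun_prop) (Filter.Eventually.of_forall fun ⟨y, t⟩ => ?_)
  simp only [Function.uncurry_apply_pair, norm_mul, norm_eq_abs, abs_exp, mul_one]
  gcongr
  nlinarith [sq_nonneg t, sq_nonneg y]

theorem integral_Ioi_integral_exp_neg_sq_mul_exp_neg_mul_sq {a b : ℝ} (ha : 0 ≤ a) (hb : 0 < b) :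
    ∫ y in Ioi (0 : ℝ), (∫ x in (0 : ℝ)..(a * y), exp (-x ^ 2)) * exp (-b * y ^ 2)
      = arctan (a / √b) / (2 * √b) := by
  calc _ = ∫ y in Ioi (0 : ℝ), ∫ t in Ioc 0 a, y * exp (-(t ^ 2 + b) * y ^ 2) := by
        simp_rw [integral_exp_neg_sq_mul_exp_neg_mul_sq, intervalIntegral.integral_of_le ha]
    _ = ∫ t in Ioc 0 a, ∫ y in Ioi (0 : ℝ), y * exp (-(t ^ 2 + b) * y ^ 2) :=
        integral_integral_swap (integrable_mul_exp_neg_sq_add_mul_sq hb _ _)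
    _ = ∫ t in Ioc 0 a, (2 * (t ^ 2 + b))⁻¹ :=
        setIntegral_congr_fun measurableSet_Ioc fun t _ =>
          integral_Ioi_mul_exp_neg_mul_sq (by positivity)
    _ = arctan (a / √b) / (2 * √b) := by
        rw [← intervalIntegral.integral_of_le ha, integral_inv_two_mul_sq_add hb]

/-- For `a, b > 0`,
`∫₀^∞ (∫₀^{ay} exp(-x²) dx) exp(-by²) dy = arctan(a/√b) / (2√b)`; equivalently
`∫₀^∞ erf(ay) exp(-by²) dy = arctan(a/√b) / √(πb)`. -/
theorem stmt18 (a b : ℝ) (ha : 0 < a) (hb : 0 < b) :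
    (∫ y in Set.Ioi (0 : ℝ),
        (∫ x in (0 : ℝ)..(a * y), Real.exp (-x ^ 2)) * Real.exp (-b * y ^ 2))
      = Real.arctan (a / Real.sqrt b) / (2 * Real.sqrt b) ∧
    (∫ y in Set.Ioi (0 : ℝ), erf (a * y) * Real.exp (-b * y ^ 2))
      = Real.arctan (a / Real.sqrt b) / Real.sqrt (Real.pi * b) := by
  have hmain := integral_Ioi_integral_exp_neg_sq_mul_exp_neg_mul_sq ha.le hb
  refine ⟨hmain, ?_⟩
  simp_rw [erf, mul_assoc, integral_const_mul, hmain, sqrt_mul pi_pos.le]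
  field_simp
end
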